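/- Any branchwise-real tree order containing at most countably many branching nodes admits a continuous grading. -/

import Mathlib

/-- A partial order is rooted if it has a minimum element. -/
def IsRooted (X : Type*) [PartialOrder X] : Prop := ∃ r : X, ∀ x, r ≤ x

/-- The set of predecessors of every element is linearly ordered. -/
def DownLinear (X : Type*) [PartialOrder X] : Prop :=
  ∀ x y z : X, y ≤ x → z ≤ x → y ≤ z ∨ z ≤ y

/-- A well-stratified tree: a rooted partial order in which the set of
predecessors of every element is well-ordered. -/
def IsWSTree (T : Type*) [PartialOrder T] : Prop :=
  IsRooted T ∧ DownLinear T ∧ ∀ x : T, (Set.Iio x).IsWF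

/-- A branchwise-real tree order: a rooted partial order with linearly
ordered predecessor sets, in which every branch (maximal chain) is
order-isomorphic to a real interval, and any two elements have a meet. -/
def IsBRTO (X : Type*) [PartialOrder X] : Prop :=
  IsRooted X ∧ DownLinear X ∧
  (∀ B : Set X, IsMaxChain (· ≤ ·) B →
      ∃ I : Set ℝ, I.OrdConnected ∧ Nonempty (B ≃o I)) ∧
  (∀ x y : X, ∃ m : X, IsGLB {x, y} m)

/-- A continuous grading: a strictly monotonic real-valued map restricting
to an order isomorphism `[x,y] → [ℓ x, ℓ y]` for all `x < y` (these intervals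
are chains, so a strictly monotonic bijection between them is an order
isomorphism). -/
def IsContinuousGrading {X : Type*} [PartialOrder X] (ℓ : X → ℝ) : Prop :=
  StrictMono ℓ ∧ ∀ x y : X, x < y →
    Set.BijOn ℓ (Set.Icc x y) (Set.Icc (ℓ x) (ℓ y))

/-- A node `x` is branching if there are two elements strictly above `x`
lying in different connected components of the set above `x`, i.e. having no
common lower bound strictly above `x`. -/
def IsBranching {X : Type*} [PartialOrder X] (x : X) : Prop :=
  ∃ y z : X, x < y ∧ x < z ∧ ¬ ∃ w : X, x < w ∧ w ≤ y ∧ w ≤ z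

/-!
Enumerate the branching nodes as `b 0, b 1, …`. The lower set they generate (the skeleton) is
graded branch by branch: the part of `[⊥, b n]` not yet graded is a segment `[m, b n]`, which is
mapped affinely onto an interval of length `2⁻¹ ^ (n + 1)`, using that every branch is
order-isomorphic to a real interval. Any other point `x` lies above `foot x`, the supremum of the
skeleton below `x`; the points that branch off above `foot x` towards `x` form a chain, because two
incomparable ones would meet at a branching node. So `x` is graded by the supremum of the skeleton's
values below `x` plus a grading of that chain.
-/

open Set

section Grading

variable {X : Type*}

def BranchesReal (X : Type*) [PartialOrder X] : Prop :=
  ∀ B : Set X, IsMaxChain (· ≤ ·) B → ∃ I : Set ℝ, I.OrdConnected ∧ Nonempty (B ≃o I)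

def IsGradingOn [Preorder X] (f : X → ℝ) (T : Set X) : Prop :=
  StrictMonoOn f T ∧ ∀ a ∈ T, ∀ b ∈ T, a ≤ b → SurjOn f (Icc a b) (Icc (f a) (f b))

namespace IsGradingOn

variable [Preorder X] {f g : X → ℝ} {S T : Set X}

lemma mono (h : IsGradingOn f T) (hST : S ⊆ T) : IsGradingOn f S :=
  ⟨h.1.mono hST, fun a ha b hb hab => h.2 a (hST ha) b (hST hb) hab⟩

lemma congr (h : IsGradingOn f T) (hT : T.OrdConnected) (hfg : EqOn f g T) :
    IsGradingOn g T := by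
  refine ⟨fun a ha b hb hab => hfg ha ▸ hfg hb ▸ h.1 ha hb hab, fun a ha b hb hab => ?_⟩
  rw [← hfg ha, ← hfg hb]
  exact (h.2 a ha b hb hab).congr (hfg.mono (hT.out ha hb))

lemma affine (h : IsGradingOn f T) {s : ℝ} (hs : 0 < s) (t : ℝ) :
    IsGradingOn (fun x => s * f x + t) T := by
  refine ⟨fun a ha b hb hab => by simpa using mul_lt_mul_of_pos_left (h.1 ha hb hab) hs,
    fun a ha b hb hab v hv => ?_⟩
  obtain ⟨z, hz, hzv⟩ := h.2 a ha b hb hab (show (v - t) / s ∈ Icc (f a) (f b) from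
    ⟨(le_div_iff₀' hs).2 (by linarith [hv.1]), (div_le_iff₀' hs).2 (by linarith [hv.2])⟩)
  exact ⟨z, hz, by simp only [hzv]; field_simp; ring⟩

end IsGradingOn

lemma DownLinear.le_or_lt [PartialOrder X] (hX : DownLinear X) {x y z : X} (hy : y ≤ x)
    (hz : z ≤ x) : y ≤ z ∨ z < y :=
  (hX x y z hy hz).elim Or.inl fun h => h.eq_or_lt.elim (fun e => Or.inl e.ge) Or.inr

lemma DownLinear.isChain_Iic [PartialOrder X] (hX : DownLinear X) (x : X) :
    IsChain (· ≤ ·) (Iic x) :=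
  fun a ha b hb _ => hX x a b ha hb

lemma DownLinear.lt_inf [SemilatticeInf X] (hX : DownLinear X) {a b c y : X} (ha : a ≤ y)
    (hb : b ≤ y) (hca : c < a) (hcb : c < b) : c < a ⊓ b := by
  rcases hX y a b ha hb with h | h
  · rwa [inf_eq_left.2 h]
  · rwa [inf_eq_right.2 h]

lemma isBranching_inf [SemilatticeInf X] {u v : X} (huv : ¬u ≤ v) (hvu : ¬v ≤ u) :
    IsBranching (u ⊓ v) :=
  ⟨u, v, inf_lt_left.2 huv, inf_lt_right.2 hvu,
    fun ⟨_, hw, hwu, hwv⟩ => not_lt_of_ge (le_inf hwu hwv) hw⟩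

lemma isContinuousGrading_of_isGradingOn_Iic [PartialOrder X] (hX : DownLinear X) {f : X → ℝ}
    (h : ∀ y, IsGradingOn f (Iic y)) : IsContinuousGrading f := by
  refine ⟨fun x y hxy => (h y).1 hxy.le le_rfl hxy, fun x y hxy => ⟨?_, ?_, ?_⟩⟩
  · exact fun z hz => ⟨(h y).1.monotoneOn hxy.le hz.2 hz.1, (h y).1.monotoneOn hz.2 le_rfl hz.2⟩
  · intro z hz w hw hzw
    by_contra hne
    rcases hX y z w hz.2 hw.2 with hle | hle
    · exact ((h y).1 hz.2 hw.2 (hle.lt_of_ne hne)).ne hzw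
    · exact ((h y).1 hw.2 hz.2 (hle.lt_of_ne' hne)).ne' hzw
  · exact (h y).2 x hxy.le y le_rfl hxy.le

lemma exists_isGradingOn_of_isChain [PartialOrder X] (hR : BranchesReal X) {T : Set X}
    (hT : IsChain (· ≤ ·) T) : ∃ f : X → ℝ, IsGradingOn f T := by
  classical
  obtain ⟨B, hB, hTB⟩ := hT.exists_maxChain
  obtain ⟨I, hI, ⟨e⟩⟩ := hR B hB
  set f : X → ℝ := fun x => if hx : x ∈ B then e ⟨x, hx⟩ else 0
  have hf : ∀ x (hx : x ∈ B), f x = e ⟨x, hx⟩ := fun x hx => dif_pos hx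
  refine ⟨f, IsGradingOn.mono ⟨fun a ha b hb hab => ?_, fun a ha b hb hab v hv => ?_⟩ hTB⟩
  · rw [hf a ha, hf b hb]
    exact e.strictMono (Subtype.mk_lt_mk.2 hab)
  · rw [hf a ha, hf b hb] at hv
    let w : I := ⟨v, hI.out (e _).2 (e _).2 hv⟩
    refine ⟨e.symm w, ⟨?_, ?_⟩, by rw [hf _ (e.symm w).2]; simp [w]⟩
    · exact Subtype.coe_le_coe.2 (e.le_symm_apply.2 (show e ⟨a, ha⟩ ≤ w from hv.1))
    · exact Subtype.coe_le_coe.2 (e.symm_apply_le.2 (show w ≤ e ⟨b, hb⟩ from hv.2))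

/-- The supremum is found inside the chain `Iic x` below an upper bound `x`, by grading that chain
and taking the supremum of the values. -/
lemma DownLinear.exists_isLUB [SemilatticeInf X] (hX : DownLinear X) (hR : BranchesReal X)
    {D : Set X} (hD : D.Nonempty) (hbdd : BddAbove D) : ∃ s, IsLUB D s := by
  obtain ⟨x, hx⟩ := hbdd
  obtain ⟨d, hd⟩ := hD
  obtain ⟨f, hfm, hfs⟩ := exists_isGradingOn_of_isChain hR (hX.isChain_Iic x)
  have hfx : f x ∈ upperBounds (f '' D) := by
    rintro _ ⟨a, ha, rfl⟩
    exact hfm.monotoneOn (hx ha) le_rfl (hx ha)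
  have hsup : IsLUB (f '' D) (sSup (f '' D)) := isLUB_csSup ⟨_, d, hd, rfl⟩ ⟨f x, hfx⟩
  obtain ⟨s, hs, hfs⟩ := hfs d (hx hd) x le_rfl (hx hd) ⟨hsup.1 ⟨d, hd, rfl⟩, hsup.2 hfx⟩
  refine ⟨s, fun a ha => ?_, fun z hz => ?_⟩
  · refine (hX.le_or_lt (hx ha) hs.2).resolve_right fun hsa => ?_
    exact (hfm hs.2 (hx ha) hsa).not_ge (hfs ▸ hsup.1 ⟨a, ha, rfl⟩)
  · have hzx : z ⊓ x ∈ upperBounds D := fun a ha => le_inf (hz ha) (hx ha)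
    refine (hX.le_or_lt hs.2 inf_le_right).elim (fun h => h.trans inf_le_left) fun h => ?_
    refine absurd (hfm inf_le_right hs.2 h) (not_lt.2 (hfs ▸ hsup.2 ?_))
    rintro _ ⟨a, ha, rfl⟩
    exact hfm.monotoneOn (hx ha) inf_le_right (hzx ha)

end Grading

section Gluing

variable {X : Type*} [PartialOrder X] {f : X → ℝ}

lemma IsGradingOn.union_Iic (hX : DownLinear X) {W : Set X} {m c : X} (hW : IsLowerSet W)
    (hWc : W ∩ Iic c = Iic m) (hfW : IsGradingOn f W) (hfc : IsGradingOn f (Icc m c)) :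
    IsGradingOn f (W ∪ Iic c) := by
  obtain ⟨hmW, hmc⟩ : m ∈ W ∩ Iic c := hWc ▸ mem_Iic.2 le_rfl
  have below : ∀ z ∈ W, z ≤ c → z ≤ m := fun z hz hzc => hWc.le ⟨hz, hzc⟩
  have above : ∀ z ≤ c, z ∉ W → m < z := fun z hzc hz =>
    (hX.le_or_lt hzc hmc).resolve_left fun h => hz (hW h hmW)
  have hmIcc : m ∈ Icc m c := ⟨le_rfl, hmc⟩
  refine ⟨fun x hx y hy hxy => ?_, fun a ha b hb hab => ?_⟩
  · by_cases hyW : y ∈ W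
    · exact hfW.1 (hW hxy.le hyW) hyW hxy
    have hyc : y ≤ c := hy.resolve_left hyW
    have hmy := above y hyc hyW
    by_cases hxW : x ∈ W
    · exact (hfW.1.monotoneOn hxW hmW (below x hxW (hxy.le.trans hyc))).trans_lt
        (hfc.1 hmIcc ⟨hmy.le, hyc⟩ hmy)
    · exact hfc.1 ⟨(above x (hxy.le.trans hyc) hxW).le, hxy.le.trans hyc⟩ ⟨hmy.le, hyc⟩ hxy
  · by_cases hbW : b ∈ W
    · exact hfW.2 a (hW hab hbW) b hbW hab
    have hbc : b ≤ c := hb.resolve_left hbW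
    have hmb := (above b hbc hbW).le
    by_cases haW : a ∈ W
    · have ham := below a haW (hab.trans hbc)
      refine ((hfW.2 a haW m hmW ham).union_union (hfc.2 m hmIcc b ⟨hmb, hbc⟩ hmb)).mono
        (union_subset (Icc_subset_Icc_right hmb) (Icc_subset_Icc_left ham))
        Icc_subset_Icc_union_Icc
    · exact hfc.2 a ⟨(above a (hab.trans hbc) haW).le, hab.trans hbc⟩ b ⟨hmb, hbc⟩ hab

lemma IsGradingOn.Iic_of_isLUB_Iio (hX : DownLinear X) {c : X} (hf : IsGradingOn f (Iio c))
    (hc : IsLUB (Iio c) c) (hfc : IsLUB (f '' Iio c) (f c)) : IsGradingOn f (Iic c) := by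
  have exists_above : ∀ x < c, ∃ a < c, x < a := fun x hx => by
    by_contra! h
    exact hx.not_ge (hc.2 fun a ha => (hX.le_or_lt ha.le hx.le).resolve_right (h a ha))
  refine ⟨fun x hx y hy hxy => ?_, fun a ha b hb hab => ?_⟩
  · rcases hy.eq_or_lt with rfl | hyc
    · obtain ⟨a, hac, hxa⟩ := exists_above x hxy
      exact (hf.1 hxy hac hxa).trans_le (hfc.1 ⟨a, hac, rfl⟩)
    · exact hf.1 (hxy.trans hyc) hyc hxy
  rcases hb.eq_or_lt with rfl | hbc
  · rcases ha.eq_or_lt with rfl | hab'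
    · simp [Icc_self]
    intro v hv
    rcases hv.2.eq_or_lt with rfl | hvb
    · exact ⟨b, right_mem_Icc.2 hab, rfl⟩
    obtain ⟨_, ⟨a', ha'b, rfl⟩, hva'⟩ := (lt_isLUB_iff hfc).1 hvb
    have haa' : a ≤ a' := (hX.le_or_lt hab ha'b.le).resolve_right fun h =>
      (hf.1.monotoneOn ha'b hab' h.le).not_gt (hv.1.trans_lt hva')
    obtain ⟨z, hz, rfl⟩ := hf.2 a hab' a' ha'b haa' ⟨hv.1, hva'.le⟩
    exact ⟨z, ⟨hz.1, hz.2.trans ha'b.le⟩, rfl⟩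
  · exact hf.2 a (hab.trans_lt hbc) b hbc hab

lemma IsGradingOn.iUnion {P : ℕ → Set X} (hP : Monotone P) (h : ∀ n, IsGradingOn f (P n)) :
    IsGradingOn f (⋃ n, P n) := by
  have common : ∀ x ∈ ⋃ n, P n, ∀ y ∈ ⋃ n, P n, ∃ n, x ∈ P n ∧ y ∈ P n := by
    intro x hx y hy
    obtain ⟨m, hm⟩ := mem_iUnion.1 hx
    obtain ⟨n, hn⟩ := mem_iUnion.1 hy
    exact ⟨max m n, hP (le_max_left m n) hm, hP (le_max_right m n) hn⟩
  refine ⟨fun x hx y hy hxy => ?_, fun a ha b hb hab => ?_⟩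
  · obtain ⟨n, hxn, hyn⟩ := common x hx y hy
    exact (h n).1 hxn hyn hxy
  · obtain ⟨n, han, hbn⟩ := common a ha b hb
    exact (h n).2 a han b hbn hab

lemma exists_isGradingOn_iUnion {P : ℕ → Set X} (hP : Monotone P)
    (hPc : ∀ n, (P n).OrdConnected) {F : ℕ → X → ℝ} (hF : ∀ n, IsGradingOn (F n) (P n))
    (hFF : ∀ n, EqOn (F (n + 1)) (F n) (P n)) :
    ∃ ℓ : X → ℝ, IsGradingOn ℓ (⋃ n, P n) ∧ ∀ n, EqOn ℓ (F n) (P n) := by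
  have coherent : ∀ m n, m ≤ n → EqOn (F n) (F m) (P m) := by
    intro m n hmn
    induction n, hmn using Nat.le_induction with
    | base => exact eqOn_refl _ _
    | succ n hmn ih => exact fun x hx => (hFF n (hP hmn hx)).trans (ih hx)
  have : ∀ x, ∃ v, ∀ n, x ∈ P n → F n x = v := fun x => by
    by_cases hx : ∃ n, x ∈ P n
    · obtain ⟨n, hn⟩ := hx
      exact ⟨F n x, fun k hk => (coherent k (max n k) (le_max_right n k) hk).symm.trans
        (coherent n (max n k) (le_max_left n k) hn)⟩
    · exact ⟨0, fun n hn => (hx ⟨n, hn⟩).elim⟩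
  choose ℓ hℓ using this
  have hℓF : ∀ n, EqOn ℓ (F n) (P n) := fun n x hx => (hℓ x n hx).symm
  exact ⟨ℓ, IsGradingOn.iUnion hP fun n => (hF n).congr (hPc n) (hℓF n).symm, hℓF⟩

lemma exists_isGradingOn_union_Iic (hX : DownLinear X) (hR : BranchesReal X) {W : Set X}
    {m c : X} (hW : IsLowerSet W) (hWc : W ∩ Iic c = Iic m) (hf : IsGradingOn f W)
    {ε : ℝ} (hε : 0 < ε) :
    ∃ g : X → ℝ, IsGradingOn g (W ∪ Iic c) ∧ EqOn g f W ∧ ∀ z ≤ c, g z ≤ f m + ε := by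
  classical
  obtain ⟨hmW, hmc⟩ : m ∈ W ∩ Iic c := hWc ▸ mem_Iic.2 le_rfl
  have below : ∀ z ∈ W, z ≤ c → z ≤ m := fun z hz hzc => hWc.le ⟨hz, hzc⟩
  by_cases hcW : c ∈ W
  · have hcW' : Iic c ⊆ W := fun z hz => hW hz hcW
    refine ⟨f, by rwa [union_eq_left.2 hcW'], eqOn_refl _ _, fun z hz => ?_⟩
    have hzW : z ∈ W := hcW' hz
    linarith [hf.1.monotoneOn hzW hmW (below z hzW hz)]
  have hmc' : m < c := hmc.lt_of_ne fun h => hcW (h ▸ hmW)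
  obtain ⟨φ, hφ⟩ := exists_isGradingOn_of_isChain hR ((hX.isChain_Iic c).mono Icc_subset_Iic_self)
  have hφmc : φ m < φ c := hφ.1 ⟨le_rfl, hmc⟩ ⟨hmc, le_rfl⟩ hmc'
  -- the new branch `[m, c]` is mapped affinely onto `[f m, f m + ε]`
  set s := ε / (φ c - φ m)
  have hs : 0 < s := div_pos hε (sub_pos.2 hφmc)
  set h : X → ℝ := fun z => s * φ z + (f m - s * φ m)
  have hhc : h c = f m + ε := by
    simp only [h, s]; field_simp [(sub_pos.2 hφmc).ne']; ring
  have hWIcc : W ∩ Icc m c ⊆ {m} := fun z hz =>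
    le_antisymm (below z hz.1 hz.2.2) hz.2.1
  refine ⟨W.piecewise f h, ?_, piecewise_eqOn _ _ _, fun z hz => ?_⟩
  · refine IsGradingOn.union_Iic hX hW hWc (hf.congr hW.ordConnected (piecewise_eqOn _ _ _).symm)
      ((hφ.affine hs (f m - s * φ m)).congr ordConnected_Icc fun z hz => ?_)
    by_cases hzW : z ∈ W
    · rw [piecewise_eq_of_mem _ _ _ hzW, hWIcc ⟨hzW, hz⟩]; ring
    · rw [piecewise_eq_of_notMem _ _ _ hzW]
  by_cases hzW : z ∈ W
  · rw [piecewise_eq_of_mem _ _ _ hzW]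
    linarith [hf.1.monotoneOn hzW hmW (below z hzW hz)]
  · rw [piecewise_eq_of_notMem _ _ _ hzW, ← hhc]
    have hmz : m ≤ z := ((hX.le_or_lt hz hmc).resolve_left fun h => hzW (hW h hmW)).le
    have := hφ.1.monotoneOn ⟨hmz, hz⟩ ⟨hmc, le_rfl⟩ hz
    simp only [h]
    gcongr

end Gluing

section Skeleton

variable {X : Type*} [SemilatticeInf X]

def partialSkeleton (b : ℕ → X) : ℕ → Set X
  | 0 => Iic (b 0)
  | n + 1 => partialSkeleton b n ∪ Iic (b (n + 1))

lemma isLowerSet_partialSkeleton (b : ℕ → X) (n : ℕ) : IsLowerSet (partialSkeleton b n) := by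
  induction n with
  | zero => exact isLowerSet_Iic _
  | succ n ih => exact ih.union (isLowerSet_Iic _)

lemma monotone_partialSkeleton (b : ℕ → X) : Monotone (partialSkeleton b) :=
  monotone_nat_of_le_succ fun _ => subset_union_left

lemma mem_partialSkeleton_self (b : ℕ → X) (n : ℕ) : b n ∈ partialSkeleton b n := by
  cases n with
  | zero => exact mem_Iic.2 le_rfl
  | succ n => exact Or.inr (mem_Iic.2 le_rfl)

lemma exists_partialSkeleton_inter_Iic_eq (hX : DownLinear X) (b : ℕ → X) (n : ℕ) (c : X) :
    ∃ m, partialSkeleton b n ∩ Iic c = Iic m := by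
  induction n with
  | zero => exact ⟨b 0 ⊓ c, Iic_inter_Iic⟩
  | succ n ih =>
    obtain ⟨m, hm⟩ := ih
    have hmc : m ≤ c := (hm.ge (mem_Iic.2 le_rfl)).2
    rw [partialSkeleton, union_inter_distrib_right, hm, Iic_inter_Iic]
    rcases hX c m (b (n + 1) ⊓ c) hmc inf_le_right with h | h
    · exact ⟨_, union_eq_right.2 (Iic_subset_Iic.2 h)⟩
    · exact ⟨_, union_eq_left.2 (Iic_subset_Iic.2 h)⟩

def skeleton (b : ℕ → X) : Set X := ⋃ n, partialSkeleton b n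

lemma isLowerSet_skeleton (b : ℕ → X) : IsLowerSet (skeleton b) :=
  isLowerSet_iUnion (isLowerSet_partialSkeleton b)

lemma mem_skeleton_self (b : ℕ → X) (n : ℕ) : b n ∈ skeleton b :=
  mem_iUnion.2 ⟨n, mem_partialSkeleton_self b n⟩

/-- The bound `1 - 2⁻¹ ^ n` leaves room for the `n`-th branch to be attached with length
`2⁻¹ ^ (n + 1)`. -/
def IsSkeletonGrading (b : ℕ → X) (n : ℕ) (f : X → ℝ) : Prop :=
  IsGradingOn f (partialSkeleton b n) ∧ ∀ x ∈ partialSkeleton b n, f x ≤ 1 - 2⁻¹ ^ n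

lemma exists_isSkeletonGrading_zero (hX : DownLinear X) (hR : BranchesReal X) (b : ℕ → X) :
    ∃ f, IsSkeletonGrading b 0 f := by
  obtain ⟨φ, hφ⟩ := exists_isGradingOn_of_isChain hR (hX.isChain_Iic (b 0))
  refine ⟨fun x => 1 * φ x + -φ (b 0), hφ.affine one_pos _, fun x (hx : x ≤ b 0) => ?_⟩
  linarith [hφ.1.monotoneOn hx (mem_Iic.2 le_rfl) hx]

lemma IsSkeletonGrading.exists_succ (hX : DownLinear X) (hR : BranchesReal X) {b : ℕ → X}
    {n : ℕ} {f : X → ℝ} (hf : IsSkeletonGrading b n f) :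
    ∃ g, IsSkeletonGrading b (n + 1) g ∧ EqOn g f (partialSkeleton b n) := by
  have hpos : ∀ k, (0 : ℝ) < 2⁻¹ ^ k := fun k => pow_pos (by norm_num) k
  obtain ⟨m, hm⟩ := exists_partialSkeleton_inter_Iic_eq hX b n (b (n + 1))
  obtain ⟨g, hg, hgf, hgc⟩ := exists_isGradingOn_union_Iic hX hR
    (isLowerSet_partialSkeleton b n) hm hf.1 (hpos (n + 1))
  have hfm := hf.2 m (hm.ge (mem_Iic.2 le_rfl)).1
  refine ⟨g, ⟨hg, fun x hx => ?_⟩, hgf⟩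
  rw [pow_succ] at hgc ⊢
  rcases hx with hx | hx
  · linarith [hgf hx, hf.2 x hx, hpos n]
  · linarith [hgc x hx]

theorem exists_isGradingOn_skeleton (hX : DownLinear X) (hR : BranchesReal X) (b : ℕ → X) :
    ∃ ℓ : X → ℝ, IsGradingOn ℓ (skeleton b) ∧ BddAbove (ℓ '' skeleton b) := by
  obtain ⟨f₀, hf₀⟩ := exists_isSkeletonGrading_zero hX hR b
  have step : ∀ n f, ∃ g, IsSkeletonGrading b n f →
      IsSkeletonGrading b (n + 1) g ∧ EqOn g f (partialSkeleton b n) := fun n f => by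
    by_cases hf : IsSkeletonGrading b n f
    · exact (hf.exists_succ hX hR).imp fun _ hg _ => hg
    · exact ⟨f, fun h => (hf h).elim⟩
  choose next hnext using step
  let F : ℕ → X → ℝ := fun n => Nat.rec f₀ next n
  have hF : ∀ n, IsSkeletonGrading b n (F n) := fun n => by
    induction n with
    | zero => exact hf₀
    | succ n ih => exact (hnext n (F n) ih).1
  obtain ⟨ℓ, hℓ, hℓF⟩ := exists_isGradingOn_iUnion (monotone_partialSkeleton b)
    (fun n => (isLowerSet_partialSkeleton b n).ordConnected) (fun n => (hF n).1)
    (fun n => (hnext n (F n) (hF n)).2)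
  refine ⟨ℓ, hℓ, 1, ?_⟩
  rintro _ ⟨x, hx, rfl⟩
  obtain ⟨n, hn⟩ := mem_iUnion.1 hx
  rw [hℓF n hn]
  linarith [(hF n).2 x hn, pow_pos (by norm_num : (0 : ℝ) < 2⁻¹) n]

end Skeleton

structure GradingData (X : Type*) [SemilatticeInf X] where
  downLinear : DownLinear X
  S : Set X
  isLowerSet : IsLowerSet S
  nonempty : S.Nonempty
  branching_subset : {x | IsBranching x} ⊆ S
  ℓ₀ : X → ℝ
  isGradingOn : IsGradingOn ℓ₀ S
  bddAbove : BddAbove (ℓ₀ '' S)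
  foot : X → X
  isLUB_foot : ∀ x, IsLUB (S ∩ Iic x) (foot x)
  ψ : Set X → X → ℝ
  isGradingOn_ψ : ∀ T, IsChain (· ≤ ·) T → IsGradingOn (ψ T) T

namespace GradingData

variable {X : Type*} [SemilatticeInf X] (D : GradingData X) {x y z : X}

def tail (x : X) : Set X := insert (D.foot x) {z | D.foot x < z ⊓ x}

noncomputable def level (c : X) : ℝ := sSup (D.ℓ₀ '' (D.S ∩ Iic c))

noncomputable def grading (x : X) : ℝ :=
  D.level (D.foot x) + (D.ψ (D.tail x) x - D.ψ (D.tail x) (D.foot x))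

lemma foot_le (x : X) : D.foot x ≤ x := (D.isLUB_foot x).2 fun _ ha => ha.2

lemma le_foot {a : X} (ha : a ∈ D.S) (hax : a ≤ x) : a ≤ D.foot x := (D.isLUB_foot x).1 ⟨ha, hax⟩

lemma foot_of_mem (hx : x ∈ D.S) : D.foot x = x := (D.foot_le x).antisymm (D.le_foot hx le_rfl)

lemma foot_eq_of_mem_Icc (hz : z ∈ Icc (D.foot y) y) : D.foot z = D.foot y := by
  have : D.S ∩ Iic z = D.S ∩ Iic y := (inter_subset_inter_right _ (Iic_subset_Iic.2 hz.2)).antisymm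
    fun a ha => ⟨ha.1, (D.le_foot ha.1 ha.2).trans hz.1⟩
  exact (D.isLUB_foot z).unique (this ▸ D.isLUB_foot y)

lemma foot_foot (y : X) : D.foot (D.foot y) = D.foot y :=
  D.foot_eq_of_mem_Icc ⟨le_rfl, D.foot_le y⟩

lemma mem_of_lt_foot {u : X} (hu : u < D.foot x) : u ∈ D.S := by
  by_contra huS
  refine hu.not_ge ((D.isLUB_foot x).2 fun a ha => ?_)
  exact (D.downLinear.le_or_lt ha.2 (hu.le.trans (D.foot_le x))).resolve_right
    fun h => huS (D.isLowerSet h.le ha.1)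

lemma Icc_foot_subset_tail (y : X) : Icc (D.foot y) y ⊆ D.tail y := fun z hz =>
  hz.1.eq_or_lt.elim (fun h => h ▸ mem_insert _ _)
    fun h => Or.inr (show D.foot y < z ⊓ y by rwa [inf_eq_left.2 hz.2])

/-- Two incomparable points of the tail would meet at a branching node, which lies in `D.S` but
strictly above `D.foot y`. -/
lemma isChain_tail (y : X) : IsChain (· ≤ ·) (D.tail y) := by
  have foot_le_of_mem : ∀ z ∈ D.tail y, D.foot y ≤ z := by
    rintro z (rfl | hz)
    exacts [le_rfl, hz.le.trans inf_le_left]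
  rintro u hu v hv -
  rcases hu with rfl | hu
  · exact Or.inl (foot_le_of_mem v hv)
  rcases hv with rfl | hv
  · exact Or.inr (foot_le_of_mem u (Or.inr hu))
  by_contra! h
  have hS : u ⊓ v ⊓ y ∈ D.S :=
    D.isLowerSet inf_le_left (D.branching_subset (isBranching_inf h.1 h.2))
  have hlt : D.foot y < u ⊓ v ⊓ y := by
    rw [inf_inf_distrib_right]
    exact D.downLinear.lt_inf inf_le_right inf_le_right hu hv
  exact hlt.not_ge (D.le_foot hS inf_le_right)

lemma tail_eq (h : D.foot y < z) (hzy : z ≤ y) : D.tail z = D.tail y := by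
  rw [tail, tail, D.foot_eq_of_mem_Icc ⟨h.le, hzy⟩]
  congr 1
  ext w
  refine ⟨fun hw => hw.trans_le (inf_le_inf_left w hzy), fun hw => ?_⟩
  calc D.foot y < w ⊓ y ⊓ z := D.downLinear.lt_inf inf_le_right hzy hw h
    _ ≤ w ⊓ z := inf_le_inf_right z inf_le_left

lemma isLUB_level (c : X) : IsLUB (D.ℓ₀ '' (D.S ∩ Iic c)) (D.level c) := by
  obtain ⟨s, hs⟩ := D.nonempty
  exact isLUB_csSup ⟨_, s ⊓ c, ⟨D.isLowerSet inf_le_left hs, inf_le_right⟩, rfl⟩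
    (D.bddAbove.mono (image_mono inter_subset_left))

lemma level_of_mem (hx : x ∈ D.S) : D.level x = D.ℓ₀ x := by
  refine (D.isLUB_level x).unique (IsGreatest.isLUB ⟨⟨x, ⟨hx, le_rfl⟩, rfl⟩, ?_⟩)
  rintro _ ⟨a, ⟨ha, hax⟩, rfl⟩
  exact D.isGradingOn.1.monotoneOn ha hx hax

lemma grading_foot (y : X) : D.grading (D.foot y) = D.level (D.foot y) := by
  rw [grading, foot_foot, sub_self, add_zero]

lemma grading_of_mem (hx : x ∈ D.S) : D.grading x = D.ℓ₀ x := by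
  have := D.grading_foot x
  rwa [D.foot_of_mem hx, D.level_of_mem hx] at this

lemma grading_eq_of_mem_Icc (hz : z ∈ Icc (D.foot y) y) :
    D.grading z = D.level (D.foot y) + (D.ψ (D.tail y) z - D.ψ (D.tail y) (D.foot y)) := by
  rcases hz.1.eq_or_lt with rfl | h
  · rw [grading_foot, sub_self, add_zero]
  · rw [grading, D.tail_eq h hz.2, D.foot_eq_of_mem_Icc hz]

lemma isGradingOn_grading : IsGradingOn D.grading D.S :=
  D.isGradingOn.congr D.isLowerSet.ordConnected fun _ hx => (D.grading_of_mem hx).symm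

lemma isGradingOn_grading_Icc_foot (y : X) : IsGradingOn D.grading (Icc (D.foot y) y) :=
  (((D.isGradingOn_ψ _ (D.isChain_tail y)).mono (D.Icc_foot_subset_tail y)).affine one_pos
    (D.level (D.foot y) - D.ψ (D.tail y) (D.foot y))).congr ordConnected_Icc
    fun z hz => by rw [D.grading_eq_of_mem_Icc hz]; ring

lemma isGradingOn_grading_Iic_foot (y : X) : IsGradingOn D.grading (Iic (D.foot y)) := by
  by_cases hy : D.foot y ∈ D.S
  · exact D.isGradingOn_grading.mono fun z hz => D.isLowerSet hz hy
  have hIio : D.S ∩ Iic (D.foot y) = Iio (D.foot y) := by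
    ext z
    exact ⟨fun hz => hz.2.lt_of_ne (by rintro rfl; exact hy hz.1),
      fun hz => ⟨D.mem_of_lt_foot hz, hz.le⟩⟩
  have hfoot := D.isLUB_foot (D.foot y)
  have hlevel := D.isLUB_level (D.foot y)
  rw [foot_foot, hIio] at hfoot
  have himage : D.ℓ₀ '' Iio (D.foot y) = D.grading '' Iio (D.foot y) :=
    image_congr fun z hz => (D.grading_of_mem (D.mem_of_lt_foot hz)).symm
  rw [hIio, ← D.grading_foot, himage] at hlevel
  exact (D.isGradingOn_grading.mono fun z hz => D.mem_of_lt_foot hz).Iic_of_isLUB_Iio D.downLinear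
    hfoot hlevel

lemma isGradingOn_grading_Iic (y : X) : IsGradingOn D.grading (Iic y) := by
  have h := (D.isGradingOn_grading_Iic_foot y).union_Iic D.downLinear (isLowerSet_Iic _)
    (by rw [Iic_inter_Iic, inf_eq_left.2 (D.foot_le y)]) (D.isGradingOn_grading_Icc_foot y)
  rwa [union_eq_right.2 (Iic_subset_Iic.2 (D.foot_le y))] at h

theorem isContinuousGrading : IsContinuousGrading D.grading :=
  isContinuousGrading_of_isGradingOn_Iic D.downLinear D.isGradingOn_grading_Iic

end GradingData

section Extension

variable {X : Type*} [SemilatticeInf X]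

lemma exists_isGradingOn_forall_isChain (hR : BranchesReal X) :
    ∃ ψ : Set X → X → ℝ, ∀ T, IsChain (· ≤ ·) T → IsGradingOn (ψ T) T := by
  choose ψ hψ using fun T : Set X => show ∃ f : X → ℝ, IsChain (· ≤ ·) T → IsGradingOn f T by
    by_cases hT : IsChain (· ≤ ·) T
    · exact (exists_isGradingOn_of_isChain hR hT).imp fun _ hf _ => hf
    · exact ⟨0, fun h => (hT h).elim⟩
  exact ⟨ψ, hψ⟩

theorem exists_isContinuousGrading_of_isGradingOn (hX : DownLinear X) (hR : BranchesReal X)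
    {S : Set X} (hS : IsLowerSet S) (hS₀ : S.Nonempty) (hbr : {x | IsBranching x} ⊆ S)
    {ℓ₀ : X → ℝ} (hℓ₀ : IsGradingOn ℓ₀ S) (hbdd : BddAbove (ℓ₀ '' S)) :
    ∃ ℓ : X → ℝ, IsContinuousGrading ℓ := by
  obtain ⟨s, hs⟩ := hS₀
  choose foot hfoot using fun x => hX.exists_isLUB hR (D := S ∩ Iic x)
    ⟨s ⊓ x, hS inf_le_left hs, inf_le_right⟩ ⟨x, fun _ h => h.2⟩
  obtain ⟨ψ, hψ⟩ := exists_isGradingOn_forall_isChain hR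
  exact ⟨_, GradingData.isContinuousGrading
    ⟨hX, S, hS, ⟨s, hs⟩, hbr, ℓ₀, hℓ₀, hbdd, foot, hfoot, ψ, hψ⟩⟩

end Extension

/-- Any branchwise-real tree order with at most countably many branching
nodes admits a continuous grading. -/
theorem brto_countably_many_branching_continuously_gradable (X : Type*)
    [PartialOrder X] (hX : IsBRTO X)
    (hc : {x : X | IsBranching x}.Countable) :
    ∃ ℓ : X → ℝ, IsContinuousGrading ℓ := by
  obtain ⟨⟨r, -⟩, hdl, hR, hglb⟩ := hX
  choose inf hinf using hglb
  let _ : SemilatticeInf X := SemilatticeInf.ofIsGLB inf hinf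
  have : Nonempty X := ⟨r⟩
  obtain ⟨b, hb⟩ := countable_iff_exists_subset_range.1 hc
  obtain ⟨ℓ₀, hℓ₀, hbdd⟩ := exists_isGradingOn_skeleton hdl hR b
  refine exists_isContinuousGrading_of_isGradingOn hdl hR (isLowerSet_skeleton b)
    ⟨b 0, mem_skeleton_self b 0⟩ (fun x hx => ?_) hℓ₀ hbdd
  obtain ⟨n, rfl⟩ := hb hx
  exact mem_skeleton_self b n
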